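/- Airy concentration: as ε → 0⁺, the family ε^{−1} Ai(x/ε) converges to the Dirac delta δ₀ in the sense of distributions; i.e., for every test function φ ∈ C_c^∞(ℝ), ∫_ℝ ε^{−1} Ai(x/ε) φ(x) dx → φ(0). -/

import Mathlib

open MeasureTheory Filter

/-- Airy concentration — as `ε → 0⁺`, `ε⁻¹ Ai(x/ε) → δ₀` in the
sense of distributions: for every test function `φ ∈ C_c^∞(ℝ)`,
`∫ ε⁻¹ Ai(x/ε) φ(x) dx → φ(0)`.  Here `Ai` is any function with the standard
Airy properties: continuous, solving `Ai'' = x·Ai`, of total (improper)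
integral `1`, bounded by `C(1+|x|)^{−1/4}`, and rapidly decaying at `+∞`. -/
theorem stmt9 (Ai : ℝ → ℝ) (hcont : Continuous Ai)
    (hode : ∀ x, deriv (deriv Ai) x = x * Ai x)
    (C : ℝ) (hC : 0 < C)
    (hbound : ∀ x : ℝ, |Ai x| ≤ C * (1 + |x|) ^ (-(1/4 : ℝ)))
    (hdecay : ∀ k : ℕ, Tendsto (fun x : ℝ => x ^ k * Ai x) atTop (nhds 0))
    (hint : Tendsto (fun R : ℝ => ∫ x in (-R)..R, Ai x) atTop (nhds 1)) :
    ∀ φ : ℝ → ℝ, ContDiff ℝ (⊤ : ℕ∞) φ → HasCompactSupport φ →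
      Tendsto (fun ε : ℝ => ∫ x : ℝ, ε⁻¹ * Ai (x / ε) * φ x)
        (nhdsWithin 0 (Set.Ioi 0)) (nhds (φ 0)) := by
  intro φ hφ hφc
  have hAim : ∀ y : ℝ, IntegrableOn Ai (Set.Ioi y) := by
    have h2 := (hdecay 2).eventually (Metric.ball_mem_nhds 0 one_pos)
    rw [eventually_atTop] at h2
    obtain ⟨N₀, hN₀⟩ := h2
    intro y
    set N : ℝ := max N₀ (max y 1) with hN
    have hN1 : (1:ℝ) ≤ N := le_max_of_le_right (le_max_right _ _)
    have hNpos : (0:ℝ) < N := lt_of_lt_of_le one_pos hN1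
    have hyN : y ≤ N := le_max_of_le_right (le_max_left _ _)
    have h1 : IntegrableOn Ai (Set.Ioc y N) := hcont.integrableOn_Ioc
    have h2 : IntegrableOn Ai (Set.Ioi N) := by
      have hrp : IntegrableOn (fun x : ℝ => x ^ (-2 : ℝ)) (Set.Ioi N) :=
        integrableOn_Ioi_rpow_of_lt (by norm_num) hNpos
      refine hrp.integrable.mono (hcont.aestronglyMeasurable.restrict) ?_
      rw [ae_restrict_iff' measurableSet_Ioi]
      refine Filter.Eventually.of_forall fun x hx => ?_
      have hx1 : (1:ℝ) ≤ x := hN1.trans (le_of_lt hx)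
      have hxpos : (0:ℝ) < x := lt_of_lt_of_le one_pos hx1
      have hb := hN₀ x (le_trans (le_max_left _ _) (le_of_lt hx))
      rw [Real.dist_eq, sub_zero] at hb
      have : |Ai x| ≤ x ^ (-2:ℝ) := by
        rw [Real.rpow_neg hxpos.le, Real.rpow_two, inv_eq_one_div, le_div_iff₀ (by positivity)]
        calc |Ai x| * x ^ 2 = |x ^ 2 * Ai x| := by
              rw [abs_mul, abs_of_nonneg (sq_nonneg x)]; ring
          _ ≤ 1 := hb.le
      simpa [Real.norm_eq_abs, abs_of_nonneg (Real.rpow_nonneg hxpos.le _)] using this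
    have : Set.Ioi y = Set.Ioc y N ∪ Set.Ioi N := (Set.Ioc_union_Ioi_eq_Ioi hyN).symm
    rw [this]
    exact h1.union h2
  have hkey : ∀ y : ℝ, ∫ t in Set.Ioi y, Ai t
      = (∫ t in Set.Ioi (0:ℝ), Ai t) - ∫ t in (0:ℝ)..y, Ai t := by
    intro y
    rcases le_total y 0 with hy | hy
    · rw [← Set.Ioc_union_Ioi_eq_Ioi hy,
        setIntegral_union (Set.Ioc_disjoint_Ioi le_rfl) measurableSet_Ioi
          hcont.integrableOn_Ioc (hAim 0),
        intervalIntegral.integral_symm, intervalIntegral.integral_of_le hy]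
      ring
    · rw [← Set.Ioc_union_Ioi_eq_Ioi hy (a := 0),
        setIntegral_union (Set.Ioc_disjoint_Ioi le_rfl) measurableSet_Ioi
          hcont.integrableOn_Ioc (hAim y),
        intervalIntegral.integral_of_le hy]
      ring
  -- F and its derivative
  set F : ℝ → ℝ := fun y => 1 - ∫ t in Set.Ioi y, Ai t with hF
  have hFrep : ∀ y, F y = (1 - ∫ t in Set.Ioi (0:ℝ), Ai t) + ∫ t in (0:ℝ)..y, Ai t := by
    intro y; rw [hF]; simp only [hkey y]; ring
  have hFd : ∀ y : ℝ, HasDerivAt F (Ai y) y := by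
    intro y
    have : HasDerivAt (fun u => (1 - ∫ t in Set.Ioi (0:ℝ), Ai t) + ∫ t in (0:ℝ)..u, Ai t)
        (Ai y) y := by
      refine HasDerivAt.const_add _ ?_
      exact intervalIntegral.integral_hasDerivAt_right (hcont.intervalIntegrable 0 y)
        (hcont.stronglyMeasurableAtFilter _ _) hcont.continuousAt
    exact this.congr_deriv rfl |>.congr_of_eventuallyEq (Filter.Eventually.of_forall
      fun u => (hFrep u))
  have hFcont : Continuous F := continuous_iff_continuousAt.2 fun y => (hFd y).continuousAt
  -- tail integral tends to 0
  have htail : Tendsto (fun y : ℝ => ∫ t in Set.Ioi y, Ai t) atTop (nhds 0) := by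
    have h1 : Tendsto (fun y : ℝ => ∫ t in (0:ℝ)..y, Ai t) atTop
        (nhds (∫ t in Set.Ioi (0:ℝ), Ai t)) :=
      intervalIntegral_tendsto_integral_Ioi 0 (hAim 0) tendsto_id
    have := (tendsto_const_nhds (x := ∫ t in Set.Ioi (0:ℝ), Ai t)
        (f := atTop (α := ℝ))).sub h1
    have heq : (fun y : ℝ => ∫ t in Set.Ioi y, Ai t)
        = fun y => (∫ t in Set.Ioi (0:ℝ), Ai t) - ∫ t in (0:ℝ)..y, Ai t := funext hkey
    rw [heq]
    simpa using this
  have hFtop : Tendsto F atTop (nhds 1) := by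
    have := (tendsto_const_nhds (x := (1:ℝ)) (f := atTop (α := ℝ))).sub htail
    simpa [hF] using this
  have hFbot : Tendsto F atBot (nhds 0) := by
    have hneg : Tendsto (fun R : ℝ => F (-R)) atTop (nhds 0) := by
      have hIoiR : Tendsto (fun R : ℝ => ∫ t in Set.Ioi (-R), Ai t) atTop (nhds 1) := by
        have heq : ∀ R : ℝ, ∫ t in Set.Ioi (-R), Ai t
            = (∫ x in (-R)..R, Ai x) + ∫ t in Set.Ioi R, Ai t := by
          intro R
          rw [hkey (-R), hkey R, intervalIntegral.integral_symm,
            ← intervalIntegral.integral_add_adjacent_intervals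
              (hcont.intervalIntegrable (-R) 0) (hcont.intervalIntegrable 0 R)]
          ring
        rw [funext heq]
        simpa using hint.add htail
      have := (tendsto_const_nhds (x := (1:ℝ)) (f := atTop (α := ℝ))).sub hIoiR
      simpa [hF] using this
    have h := hneg.comp tendsto_neg_atBot_atTop
    refine h.congr fun y => ?_
    simp [Function.comp]
  -- boundedness
  obtain ⟨K, hK⟩ : ∃ K : ℝ, ∀ y, |F y| ≤ K := by
    have h1 := hFtop.eventually (Metric.ball_mem_nhds (1:ℝ) one_pos)
    have h2 := hFbot.eventually (Metric.ball_mem_nhds (0:ℝ) one_pos)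
    rw [eventually_atTop] at h1
    rw [eventually_atBot] at h2
    obtain ⟨A, hA⟩ := h1
    obtain ⟨B, hB⟩ := h2
    obtain ⟨K0, hK0⟩ := (isCompact_Icc (a := B) (b := A)).exists_bound_of_continuousOn
      hFcont.continuousOn
    refine ⟨max K0 2, fun y => ?_⟩
    rcases le_total y B with hy | hy
    · have := hB y hy
      rw [Real.dist_eq, sub_zero] at this
      exact le_max_of_le_right (by linarith)
    rcases le_total y A with hy' | hy'
    · exact le_max_of_le_left (by simpa using hK0 y ⟨hy, hy'⟩)
    · have := hA y hy'
      rw [Real.dist_eq] at this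
      have h2 := abs_lt.1 this
      exact le_max_of_le_right (abs_le.2 ⟨by linarith, by linarith⟩)
  have hφdiff : Differentiable ℝ φ := hφ.differentiable (by simp)
  have hφ'cont : Continuous (deriv φ) := hφ.continuous_deriv (by simp)
  -- support bound
  obtain ⟨r, hr⟩ := hφc.isCompact.isBounded.subset_closedBall 0
  set M : ℝ := max r 0 + 1 with hM
  have hMpos : 0 < M := by positivity
  have hrM : r < M := by simp [hM]; nlinarith [le_max_left r 0, le_max_right r 0]
  have hsupp : ∀ x : ℝ, M ≤ |x| → φ x = 0 := by
    intro x hx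
    apply image_eq_zero_of_notMem_tsupport
    intro hmem
    have hx' := hr hmem
    rw [Real.closedBall_eq_Icc] at hx'
    have h1 : -r ≤ x := by simpa using hx'.1
    have h2 : x ≤ r := by simpa using hx'.2
    have : |x| ≤ r := abs_le.2 ⟨h1, h2⟩
    linarith
  have hsupp' : ∀ x : ℝ, M ≤ |x| → deriv φ x = 0 := by
    intro x hx
    by_contra h
    have hmem : x ∈ tsupport φ := support_deriv_subset (by simpa using h)
    have hx' := hr hmem
    rw [Real.closedBall_eq_Icc] at hx'
    have h1 : -r ≤ x := by simpa using hx'.1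
    have h2 : x ≤ r := by simpa using hx'.2
    have : |x| ≤ r := abs_le.2 ⟨h1, h2⟩
    linarith
  -- IBP identity for ε > 0
  have hIBP : ∀ ε : ℝ, 0 < ε →
      ∫ x : ℝ, ε⁻¹ * Ai (x / ε) * φ x
        = - ∫ x in Set.Ioc (-M) M, F (x / ε) * deriv φ x := by
    intro ε hε
    have h1 : ∫ x : ℝ, ε⁻¹ * Ai (x / ε) * φ x
        = ∫ x in (-M)..M, ε⁻¹ * Ai (x / ε) * φ x := by
      refine (intervalIntegral.integral_eq_integral_of_support_subset ?_).symm
      intro x hx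
      simp only [Function.mem_support] at hx
      constructor
      · by_contra h
        push_neg at h
        exact hx (by rw [hsupp x (by rw [abs_of_nonpos (by linarith)]; linarith)]; ring)
      · by_contra h
        push_neg at h
        exact hx (by rw [hsupp x (by rw [abs_of_nonneg (by linarith)]; linarith)]; ring)
    have hder : ∀ x : ℝ, HasDerivAt (fun x => F (x / ε) * φ x)
        (ε⁻¹ * Ai (x / ε) * φ x + F (x / ε) * deriv φ x) x := by
      intro x
      have h1 : HasDerivAt (fun x : ℝ => x / ε) (1 / ε) x := (hasDerivAt_id x).div_const ε
      have h2 : HasDerivAt (fun x : ℝ => F (x / ε)) (Ai (x / ε) * (1 / ε)) x :=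
        by have h2' := (hFd (x / ε)).comp x h1; exact h2'
      have := h2.mul (hφdiff x).hasDerivAt
      exact this.congr_deriv (by ring)
    have hcint : Continuous fun x => ε⁻¹ * Ai (x / ε) * φ x + F (x / ε) * deriv φ x := by
      fun_prop
    have h2 := intervalIntegral.integral_eq_sub_of_hasDerivAt
      (fun x _ => hder x) (hcint.intervalIntegrable (-M) M)
    rw [hsupp M (by rw [abs_of_pos hMpos]), hsupp (-M) (by rw [abs_neg, abs_of_pos hMpos]),
      mul_zero, mul_zero, sub_zero] at h2
    have h3 : Continuous fun x => ε⁻¹ * Ai (x / ε) * φ x := by fun_prop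
    have h4 : Continuous fun x => F (x / ε) * deriv φ x := by fun_prop
    rw [intervalIntegral.integral_add (h3.intervalIntegrable _ _)
      (h4.intervalIntegrable _ _)] at h2
    rw [h1]
    simp only [intervalIntegral.integral_of_le (by linarith : -M ≤ M)] at h2 ⊢
    linarith [h2]
  -- bound on deriv φ
  obtain ⟨D, hD⟩ := (hφc.deriv).exists_bound_of_continuous hφ'cont
  -- limit function
  set g : ℝ → ℝ := Set.Ioi (0:ℝ) |>.indicator (deriv φ) with hg
  -- dominated convergence
  have hDCT : Tendsto (fun ε : ℝ => ∫ x in Set.Ioc (-M) M, F (x / ε) * deriv φ x)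
      (nhdsWithin 0 (Set.Ioi 0)) (nhds (∫ x in Set.Ioc (-M) M, g x)) := by
    refine tendsto_integral_filter_of_dominated_convergence (fun _ => K * D)
      ?_ ?_ ?_ ?_
    · refine Filter.Eventually.of_forall fun ε => ?_
      exact ((hFcont.comp (continuous_id.div_const ε)).mul hφ'cont).aestronglyMeasurable.restrict
    · refine Filter.Eventually.of_forall fun ε => ?_
      refine Filter.Eventually.of_forall fun x => ?_
      have h1 : |F (x / ε)| ≤ K := hK _
      have h2 : ‖deriv φ x‖ ≤ D := hD x
      have hK0 : 0 ≤ K := le_trans (abs_nonneg _) (hK 0)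
      calc ‖F (x / ε) * deriv φ x‖ = |F (x / ε)| * ‖deriv φ x‖ := by
            rw [norm_mul]; rfl
        _ ≤ K * D := mul_le_mul h1 h2 (norm_nonneg _) hK0
    · exact integrable_const _
    · have h0 : ∀ᵐ x : ℝ, x ≠ 0 := by
        rw [ae_iff]
        convert Real.volume_singleton (a := 0) using 2
        ext x; simp
      refine ae_restrict_of_ae (h0.mono fun x hx => ?_)
      rcases hx.lt_or_gt with hneg | hpos
      · have hdiv : Tendsto (fun ε : ℝ => x / ε) (nhdsWithin 0 (Set.Ioi 0)) atBot := by
          have := tendsto_inv_nhdsGT_zero (𝕜 := ℝ)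
          have := this.const_mul_atTop_of_neg hneg
          refine this.congr fun ε => ?_
          rw [div_eq_mul_inv]
        have := (hFbot.comp hdiv).mul_const (deriv φ x)
        rw [zero_mul] at this
        convert this using 2
        · simp [hg, Set.indicator_of_notMem (by simp [not_lt.2 hneg.le] : x ∉ Set.Ioi (0:ℝ))]
        · simp [hg, Set.indicator_of_notMem (by simp [not_lt.2 hneg.le] : x ∉ Set.Ioi (0:ℝ))]
      · have hdiv : Tendsto (fun ε : ℝ => x / ε) (nhdsWithin 0 (Set.Ioi 0)) atTop := by
          have := tendsto_inv_nhdsGT_zero (𝕜 := ℝ)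
          have := this.const_mul_atTop hpos
          refine this.congr fun ε => ?_
          rw [div_eq_mul_inv]
        have := (hFtop.comp hdiv).mul_const (deriv φ x)
        rw [one_mul] at this
        convert this using 2
        · simp [hg, Set.indicator_of_mem (by simpa using hpos : x ∈ Set.Ioi (0:ℝ))]
        · simp [hg, Set.indicator_of_mem (by simpa using hpos : x ∈ Set.Ioi (0:ℝ))]
  -- value of the limit integral
  have hgval : ∫ x in Set.Ioc (-M) M, g x = - φ 0 := by
    rw [hg, setIntegral_indicator measurableSet_Ioi]
    have : Set.Ioc (-M) M ∩ Set.Ioi 0 = Set.Ioc 0 M := by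
      ext x; simp only [Set.mem_inter_iff, Set.mem_Ioc, Set.mem_Ioi]
      constructor
      · rintro ⟨⟨_, h2⟩, h3⟩; exact ⟨h3, h2⟩
      · rintro ⟨h1, h2⟩; exact ⟨⟨by linarith, h2⟩, h1⟩
    rw [this, ← intervalIntegral.integral_of_le hMpos.le,
      intervalIntegral.integral_deriv_eq_sub (fun x _ => hφdiff x)
        (hφ'cont.intervalIntegrable _ _),
      hsupp M (by rw [abs_of_pos hMpos])]
    ring
  -- conclusion
  have hfinal := hDCT.neg
  rw [hgval, neg_neg] at hfinal
  refine hfinal.congr' ?_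
  refine eventually_nhdsWithin_of_forall fun ε hε => ?_
  exact (hIBP ε hε).symm
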